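/- Let F ⊆ K be fields and ν : K^× → ℤ a valuation on K which is trivial on F^× and unbounded below on K^×. Fix an F-vector-space decomposition K = F ⊕ K₀ and, for an integer m ≥ 0, set W_m = {0} ∪ {k ∈ K^× : ν(k) ≥ −m}. Then W_m is a restricted F-subspace of K: it is an F-subspace containing F, and for every nonzero finite-dimensional F-subspace V ⊆ K there exists b ∈ K with Vb ⊆ K₀ and Vb ⊄ W_m (since K is commutative, the symmetric condition b′V ⊆ K₀, b′V ⊄ W_m also holds). -/

import Mathlib

/-- The set `W_m = {0} ∪ {k ∈ Kˣ : ν(k) ≥ -m}`. -/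
def Wset {K : Type*} [Field K] (ν : Kˣ → ℤ) (m : ℕ) : Set K :=
  {k : K | k = 0 ∨ ∃ u : Kˣ, (u : K) = k ∧ -(m : ℤ) ≤ ν u}

section helpers

variable {F K : Type*} [Field F] [Field K] [Algebra F K] (ν : Kˣ → ℤ)

theorem nu_smul (hmul : ∀ a b : Kˣ, ν (a * b) = ν a + ν b)
    (htriv : ∀ u : Kˣ, (u : K) ∈ Set.range (algebraMap F K) → ν u = 0)
    (c : F) (k : K) (h1 : c • k ≠ 0) (h2 : k ≠ 0) :
    ν (Units.mk0 (c • k) h1) = ν (Units.mk0 k h2) := by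
  have hc : algebraMap F K c ≠ 0 := by
    intro h; apply h1; rw [Algebra.smul_def, h, zero_mul]
  have h1' : algebraMap F K c * k ≠ 0 := mul_ne_zero hc h2
  have e : Units.mk0 (c • k) h1 = Units.mk0 (algebraMap F K c) hc * Units.mk0 k h2 := by
    ext; simp [Algebra.smul_def]
  rw [e, hmul, htriv (Units.mk0 (algebraMap F K c) hc) ⟨c, rfl⟩, zero_add]

theorem nu_span_bound (hmul : ∀ a b : Kˣ, ν (a * b) = ν a + ν b)
    (hadd : ∀ (a b : Kˣ) (h : (a : K) + (b : K) ≠ 0),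
      min (ν a) (ν b) ≤ ν (Units.mk0 ((a : K) + (b : K)) h))
    (htriv : ∀ u : Kˣ, (u : K) ∈ Set.range (algebraMap F K) → ν u = 0)
    (s : Finset K) :
    ∃ C : ℤ, ∀ k, k ∈ Submodule.span F (s : Set K) → ∀ h : k ≠ 0,
      C ≤ ν (Units.mk0 k h) := by
  classical
  induction s using Finset.induction_on with
  | empty =>
    refine ⟨0, fun k hk h => absurd ?_ h⟩
    simpa using hk
  | @insert a s ha ih =>
    obtain ⟨C, hC⟩ := ih
    by_cases haz : a = 0
    · refine ⟨C, fun k hk h => hC k ?_ h⟩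
      have : (insert a s : Finset K) = insert (0:K) s := by rw [haz]
      rw [this] at hk
      simpa [Submodule.span_insert_eq_span (Submodule.zero_mem _)] using hk
    · refine ⟨min C (ν (Units.mk0 a haz)), fun k hk h => ?_⟩
      rw [Finset.coe_insert, Submodule.span_insert] at hk
      obtain ⟨x, hx, y, hy, rfl⟩ := Submodule.mem_sup.mp hk
      obtain ⟨c, rfl⟩ := Submodule.mem_span_singleton.mp hx
      by_cases hxz : c • a = 0
      · have hy0 : y ≠ 0 := by intro hy0; exact h (by rw [hxz, hy0, add_zero])
        have e : Units.mk0 (c • a + y) h = Units.mk0 y hy0 := Units.ext (by simp [hxz])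
        rw [e]
        exact le_trans (min_le_left _ _) (hC _ hy hy0)
      · by_cases hyz : y = 0
        · have e : Units.mk0 (c • a + y) h = Units.mk0 (c • a) hxz :=
            Units.ext (by simp [hyz])
          rw [e, nu_smul ν hmul htriv c a hxz haz]
          exact min_le_right _ _
        · have e := hadd (Units.mk0 (c • a) hxz) (Units.mk0 y hyz)
            (by simpa using h)
          simp only [Units.val_mk0] at e
          rw [nu_smul ν hmul htriv c a hxz haz] at e
          exact le_trans (le_min (min_le_right _ _)
            ((min_le_left _ _).trans (hC y hy hyz))) e
end helpers

/-- Let `F ⊆ K` be fields, `ν` a valuation on `K` trivial on `F` and unbounded below,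
and `K = F ⊕ K₀` a vector-space decomposition.  Then for every `m ≥ 0` the set
`W_m = {0} ∪ {k ∈ Kˣ : ν(k) ≥ -m}` is an `F`-subspace of `K` containing `F`, and it is
restricted: for every nonzero finite-dimensional `F`-subspace `V ⊆ K` there is `b ∈ K`
with `Vb ⊆ K₀`, `Vb ⊄ W_m`, and (symmetrically) `b′ ∈ K` with `b′V ⊆ K₀`, `b′V ⊄ W_m`. -/
theorem stmt_10 {F K : Type*} [Field F] [Field K] [Algebra F K] (ν : Kˣ → ℤ)
    (hmul : ∀ a b : Kˣ, ν (a * b) = ν a + ν b)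
    (hadd : ∀ (a b : Kˣ) (h : (a : K) + (b : K) ≠ 0),
      min (ν a) (ν b) ≤ ν (Units.mk0 ((a : K) + (b : K)) h))
    (htriv : ∀ u : Kˣ, (u : K) ∈ Set.range (algebraMap F K) → ν u = 0)
    (hunb : ∀ N : ℤ, ∃ u : Kˣ, ν u < N)
    (K₀ : Submodule F K) (hK₀ : IsCompl (Submodule.span F {(1 : K)}) K₀)
    (m : ℕ) :
    (∃ Wm : Submodule F K, (Wm : Set K) = Wset ν m) ∧
    (∀ c : F, algebraMap F K c ∈ Wset ν m) ∧
    (∀ V : Submodule F K, V ≠ ⊥ → FiniteDimensional F ↥V →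
      (∃ b : K, (∀ v ∈ V, v * b ∈ K₀) ∧ ∃ v ∈ V, v * b ∉ Wset ν m) ∧
      (∃ b' : K, (∀ v ∈ V, b' * v ∈ K₀) ∧ ∃ v ∈ V, b' * v ∉ Wset ν m)) := by
  classical
  -- membership criterion
  have memW : ∀ k : K, k ∈ Wset ν m ↔ (k = 0 ∨ ∃ h : k ≠ 0, -(m:ℤ) ≤ ν (Units.mk0 k h)) := by
    intro k
    constructor
    · rintro (rfl | ⟨u, rfl, hu⟩)
      · exact Or.inl rfl
      · exact Or.inr ⟨u.ne_zero, by rwa [Units.mk0_val u u.ne_zero]⟩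
    · rintro (rfl | ⟨h, hle⟩)
      · exact Or.inl rfl
      · exact Or.inr ⟨Units.mk0 k h, rfl, hle⟩
  refine ⟨?_, ?_, ?_⟩
  · -- Wset is a submodule
    have haddm : ∀ {x y : K}, x ∈ Wset ν m → y ∈ Wset ν m → x + y ∈ Wset ν m := by
      rintro x y hx hy
      rcases (memW x).mp hx with rfl | ⟨hx0, hxn⟩
      · simpa using hy
      rcases (memW y).mp hy with rfl | ⟨hy0, hyn⟩
      · simpa using hx
      rw [memW]
      by_cases h : x + y = 0
      · exact Or.inl h
      · refine Or.inr ⟨h, ?_⟩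
        have := hadd (Units.mk0 x hx0) (Units.mk0 y hy0) (by simpa using h)
        refine le_trans (le_min hxn hyn) (le_trans this (le_of_eq ?_))
        congr 1
    have hsmulm : ∀ (c : F) {x : K}, x ∈ Wset ν m → c • x ∈ Wset ν m := by
      rintro c x hx
      rcases (memW x).mp hx with rfl | ⟨hx0, hxn⟩
      · exact Or.inl (smul_zero c)
      rw [memW]
      by_cases h : c • x = 0
      · exact Or.inl h
      · exact Or.inr ⟨h, by rwa [nu_smul ν hmul htriv c x h hx0]⟩
    exact ⟨{ carrier := Wset ν m
             zero_mem' := Or.inl rfl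
             add_mem' := fun hx hy => haddm hx hy
             smul_mem' := fun c x hx => hsmulm c hx }, rfl⟩
  · -- contains F
    intro c
    rw [memW]
    by_cases h : algebraMap F K c = 0
    · exact Or.inl h
    · refine Or.inr ⟨h, ?_⟩
      rw [htriv (Units.mk0 _ h) ⟨c, rfl⟩]
      omega
  · -- restricted
    intro V hVbot hVfin
    have key : ∃ b : K, (∀ v ∈ V, v * b ∈ K₀) ∧ ∃ v ∈ V, v * b ∉ Wset ν m := by
      -- spanning finset of V
      obtain ⟨s, hs⟩ : V.FG := by
        rw [← Submodule.fg_top V]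
        exact Module.Finite.fg_top
      -- projection onto span{1} with kernel K₀
      set p := Submodule.linearProjOfIsCompl _ _ hK₀ with hp
      -- T : K →ₗ (s → span{1})
      set T : K →ₗ[F] (↥(s : Set K) → ↥(Submodule.span F {(1:K)})) :=
        LinearMap.pi (fun i => p.comp (LinearMap.mulLeft F (i : K))) with hT
      set W := LinearMap.ker T with hW
      have hWmem : ∀ b : K, b ∈ W ↔ ∀ v ∈ V, v * b ∈ K₀ := by
        intro b
        constructor
        · intro hb v hv
          have h1 : ∀ i : ↥(s : Set K), (i : K) * b ∈ K₀ := by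
            intro i
            have hb' : T b = 0 := hb
            have h3 : p ((i : K) * b) = 0 := congrFun hb' i
            exact (Submodule.linearProjOfIsCompl_apply_eq_zero_iff hK₀).mp h3
          have : V ≤ Submodule.comap (LinearMap.mulRight F b) K₀ := by
            rw [← hs, Submodule.span_le]
            intro x hx
            exact h1 ⟨x, hx⟩
          exact this hv
        · intro hb
          rw [hW, LinearMap.mem_ker]
          funext i
          show p ((i : K) * b) = 0
          exact (Submodule.linearProjOfIsCompl_apply_eq_zero_iff hK₀).mpr
            (hb _ (hs ▸ Submodule.subset_span i.2))
      -- quotient by W is finite dimensional, hence a finite-dim complement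
      haveI : FiniteDimensional F ↥(Submodule.span F {(1:K)}) :=
        FiniteDimensional.span_of_finite F (Set.finite_singleton 1)
      haveI : FiniteDimensional F (K ⧸ W) :=
        Module.Finite.equiv T.quotKerEquivRange.symm
      obtain ⟨U, hU⟩ := Submodule.exists_isCompl W
      haveI : FiniteDimensional F ↥U :=
        Module.Finite.equiv (Submodule.quotientEquivOfIsCompl W U hU)
      obtain ⟨t, ht⟩ : U.FG := by
        rw [← Submodule.fg_top U]; exact Module.Finite.fg_top
      obtain ⟨C, hC⟩ := nu_span_bound ν hmul hadd htriv t
      -- pick v₀ ∈ V nonzero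
      obtain ⟨v₀, hv₀V, hv₀⟩ := Submodule.exists_mem_ne_zero_of_ne_bot hVbot
      by_contra hcon
      push_neg at hcon
      have hWbd : ∀ b, b ∈ W → ∀ hb : b ≠ 0,
          -(m:ℤ) - ν (Units.mk0 v₀ hv₀) ≤ ν (Units.mk0 b hb) := by
        intro b hb hb0
        have hvb : v₀ * b ∈ Wset ν m := hcon b ((hWmem b).mp hb) v₀ hv₀V
        have hvb0 : v₀ * b ≠ 0 := mul_ne_zero hv₀ hb0
        rcases (memW _).mp hvb with h0 | ⟨h0, hle⟩
        · exact absurd h0 hvb0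
        · have e : Units.mk0 (v₀*b) h0 = Units.mk0 v₀ hv₀ * Units.mk0 b hb0 :=
            Units.ext (by simp)
          rw [e, hmul] at hle
          linarith
      obtain ⟨u, hu⟩ := hunb (min C (-(m:ℤ) - ν (Units.mk0 v₀ hv₀)))
      have htop : (u:K) ∈ W ⊔ U := by rw [hU.sup_eq_top]; trivial
      obtain ⟨w, hw, x, hx, hwx⟩ := Submodule.mem_sup.mp htop
      have hxU : x ∈ Submodule.span F (t : Set K) := by rw [ht]; exact hx
      by_cases hwz : w = 0
      · have hx0 : x ≠ 0 := by
          intro h0; exact u.ne_zero (by rw [← hwx, hwz, h0, add_zero])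
        have := hC x hxU hx0
        have e : Units.mk0 x hx0 = u := Units.ext (by simp [← hwx, hwz])
        rw [e] at this
        have := min_le_left C (-(m:ℤ) - ν (Units.mk0 v₀ hv₀))
        omega
      · by_cases hxz : x = 0
        · have hwu : Units.mk0 w hwz = u := Units.ext (by simp [← hwx, hxz])
          have := hWbd w hw hwz
          rw [hwu] at this
          have := min_le_right C (-(m:ℤ) - ν (Units.mk0 v₀ hv₀))
          omega
        · have e := hadd (Units.mk0 w hwz) (Units.mk0 x hxz)
            (by simpa [hwx] using u.ne_zero)
          simp only [Units.val_mk0] at e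
          have e2 : Units.mk0 (w + x) (by simpa [hwx] using u.ne_zero) = u :=
            Units.ext (by simp [hwx])
          rw [e2] at e
          have h1 := hC x hxU hxz
          have h2 := hWbd w hw hwz
          have h3 := min_le_left C (-(m:ℤ) - ν (Units.mk0 v₀ hv₀))
          have h4 := min_le_right C (-(m:ℤ) - ν (Units.mk0 v₀ hv₀))
          simp only [le_min_iff, min_le_iff] at *
          omega
    obtain ⟨b, hb1, hb2⟩ := key
    exact ⟨⟨b, hb1, hb2⟩, ⟨b, fun v hv => by rw [mul_comm]; exact hb1 v hv,
      by obtain ⟨v, hv, h⟩ := hb2; exact ⟨v, hv, by rwa [mul_comm]⟩⟩⟩
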